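/- arXiv:1004.0062 — 4 statements merged into one kernel-verified Lean document; each statement's English description precedes it below -/
import Mathlib

section
/- For every natural number n of boolean variables and every natural number k with 0 ≤ k ≤ 2^n - 1, there exists a boolean function φ : (Fin n → Bool) → Bool such that the number of satisfying assignments of φ (i.e., the cardinality of {a : Fin n → Bool | φ a = true}) is exactly k. Moreover, such a φ can be expressed as a formula built from variables, conjunction, disjunction, and the constant false, of size linear in n. -/
/-- Boolean formulas over `n` variables built from `false`, variables,
conjunction and disjunction. -/
inductive BForm (n : ℕ) where
  | fls : BForm n
  | var (i : Fin n) : BForm n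
  | conj (a b : BForm n) : BForm n
  | disj (a b : BForm n) : BForm n

/-- Evaluation of a boolean formula under an assignment. -/
def BForm.eval {n : ℕ} (a : Fin n → Bool) : BForm n → Bool
  | .fls => false
  | .var i => a i
  | .conj φ ψ => φ.eval a && ψ.eval a
  | .disj φ ψ => φ.eval a || ψ.eval a

/-- Size of a boolean formula. -/
def BForm.size {n : ℕ} : BForm n → ℕ
  | .fls => 1
  | .var _ => 1
  | .conj φ ψ => φ.size + ψ.size + 1
  | .disj φ ψ => φ.size + ψ.size + 1


/-! Splitting on the leading variable: `x₀ ∧ ψ` (with `ψ` not mentioning `x₀`) has exactly as many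
satisfying assignments as `ψ`, while `x₀ ∨ ψ` has `2 ^ (n - 1)` more. Reading the binary digits of
`k`, most significant first, therefore builds a formula with `k` satisfying assignments using one
connective per variable. -/

namespace BForm

variable {n m : ℕ}

def rename (f : Fin n → Fin m) : BForm n → BForm m
  | .fls => .fls
  | .var i => .var (f i)
  | .conj φ ψ => .conj (φ.rename f) (ψ.rename f)
  | .disj φ ψ => .disj (φ.rename f) (ψ.rename f)

@[simp]
lemma eval_rename (f : Fin n → Fin m) (a : Fin m → Bool) (φ : BForm n) :
    (φ.rename f).eval a = φ.eval (a ∘ f) := by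
  induction φ <;> simp [rename, eval, *]

@[simp]
lemma size_rename (f : Fin n → Fin m) (φ : BForm n) : (φ.rename f).size = φ.size := by
  induction φ <;> simp [rename, size, *]

def satCount (φ : BForm n) : ℕ :=
  (Finset.univ.filter fun a : Fin n → Bool => φ.eval a = true).card

lemma satCount_eq_add_cons (φ : BForm (n + 1)) :
    φ.satCount = (Finset.univ.filter fun f : Fin n → Bool => φ.eval (Fin.cons false f)).card
      + (Finset.univ.filter fun f : Fin n → Bool => φ.eval (Fin.cons true f)).card := by
  simp only [satCount, Finset.card_filter]
  rw [← (Fin.consEquiv fun _ => Bool).sum_comp, Fintype.sum_prod_type, Fintype.sum_bool, add_comm]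
  rfl

lemma satCount_conj_var_zero (φ : BForm n) :
    (conj (var 0) (φ.rename Fin.succ)).satCount = φ.satCount := by
  rw [satCount_eq_add_cons]
  simp [satCount, eval, Function.comp_def]

lemma satCount_disj_var_zero (φ : BForm n) :
    (disj (var 0) (φ.rename Fin.succ)).satCount = 2 ^ n + φ.satCount := by
  rw [satCount_eq_add_cons, add_comm]
  simp [satCount, eval, Function.comp_def]

/-- The paper's `iter` on the `n`-digit binary expansion of `k`. -/
def ofCount : (n : ℕ) → ℕ → BForm n
  | 0, _ => .fls
  | n + 1, k =>
    if k < 2 ^ n then conj (var 0) ((ofCount n k).rename Fin.succ)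
    else disj (var 0) ((ofCount n (k - 2 ^ n)).rename Fin.succ)

lemma satCount_ofCount : ∀ {n k : ℕ}, k < 2 ^ n → (ofCount n k).satCount = k
  | 0, k, hk => by
    obtain rfl : k = 0 := by simpa using hk
    rfl
  | n + 1, k, hk => by
    unfold ofCount
    split_ifs with hlow
    · rw [satCount_conj_var_zero, satCount_ofCount hlow]
    · have hhigh : k - 2 ^ n < 2 ^ n := by rw [pow_succ] at hk; omega
      rw [satCount_disj_var_zero, satCount_ofCount hhigh]
      omega

lemma size_ofCount : ∀ n k, (ofCount n k).size ≤ 2 * n + 1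
  | 0, _ => le_rfl
  | n + 1, k => by
    have := size_ofCount n k
    have := size_ofCount n (k - 2 ^ n)
    unfold ofCount
    split_ifs <;> simp only [size, size_rename] <;> omega

end BForm

theorem exists_formula_with_count :
    ∃ C : ℕ, ∀ (n k : ℕ), k ≤ 2 ^ n - 1 →
      ∃ φ : BForm n,
        (Finset.univ.filter fun a : Fin n → Bool => φ.eval a = true).card = k ∧
        φ.size ≤ C * n + C := by
  refine ⟨2, fun n k hk => ⟨BForm.ofCount n k, BForm.satCount_ofCount ?_, ?_⟩⟩
  · have := Nat.one_le_two_pow (n := n)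
    omega
  · have := BForm.size_ofCount n k
    omega
end

section
/- Define iter : List Bool → ℕ → ((ℕ → Bool) → Bool) by iter [] _ = (fun _ => false), iter (false :: ℓ) i = (fun a => a i && iter ℓ (i-1) a), iter (true :: ℓ) i = (fun a => a i || iter ℓ (i-1) a). If ℓ is the n-bit binary representation of k (most significant bit first, 0 ≤ k < 2^n), then the formula iter ℓ n, viewed as a function of the variables x_1,...,x_n, has exactly k satisfying assignments among the 2^n assignments to those variables. -/
/-!
Split the assignments to `x_1, …, x_{m+1}` according to the top variable `x_{m+1}`, the one
tested first by `iter`. With leading bit `0` the formula `x_{m+1} ∧ F` is satisfied exactly by the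
assignments with `x_{m+1}` true that satisfy `F`; with leading bit `1` the formula `x_{m+1} ∨ F` is
satisfied by all `2^m` assignments with `x_{m+1}` true and by those with `x_{m+1}` false that
satisfy `F`. So the count obeys the recursion `c · 2^m + v` of the binary value of the bit string.
-/

/-- The formula-building procedure from the paper: `iter` consumes the bits of
`k` (most significant first), using variable `x_i` at recursion depth `i`. -/
def iter : List Bool → ℕ → (ℕ → Bool) → Bool
  | [], _ => fun _ => false
  | (false :: l), i => fun a => a i && iter l (i - 1) a
  | (true :: l), i => fun a => a i || iter l (i - 1) a

open Finset

lemma iter_congr (l : List Bool) (i : ℕ) {a a' : ℕ → Bool} (h : ∀ j ≤ i, a j = a' j) :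
    iter l i a = iter l i a' := by
  induction l generalizing i with
  | nil => rfl
  | cons b l ih =>
    have hi : a i = a' i := h i le_rfl
    have hl : iter l (i - 1) a = iter l (i - 1) a' := ih _ fun j hj => h j (by omega)
    cases b <;> simp only [iter, hi, hl]

def valuation {n : ℕ} (a : Fin n → Bool) (i : ℕ) : Bool :=
  if h : 1 ≤ i ∧ i ≤ n then a ⟨i - 1, by omega⟩ else false

lemma valuation_snoc_last {m : ℕ} (a : Fin m → Bool) (b : Bool) :
    valuation (Fin.snoc a b : Fin (m + 1) → Bool) (m + 1) = b := by
  simp only [valuation, le_refl, and_true, Nat.le_add_left, dite_true, Nat.add_sub_cancel]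
  exact Fin.snoc_last (α := fun _ => Bool) b a

lemma valuation_snoc_of_le {m j : ℕ} (a : Fin m → Bool) (b : Bool) (hj : j ≤ m) :
    valuation (Fin.snoc a b : Fin (m + 1) → Bool) j = valuation a j := by
  unfold valuation
  by_cases h1 : 1 ≤ j
  · rw [dif_pos ⟨h1, by omega⟩, dif_pos ⟨h1, hj⟩]
    exact Fin.snoc_castSucc (α := fun _ => Bool) (i := ⟨j - 1, by omega⟩) b a
  · rw [dif_neg (by omega), dif_neg (by omega)]

lemma iter_cons_valuation_snoc {m : ℕ} (c : Bool) (l : List Bool) (a : Fin m → Bool) (b : Bool) :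
    iter (c :: l) (m + 1) (valuation (Fin.snoc a b : Fin (m + 1) → Bool))
      = if c then b || iter l m (valuation a) else b && iter l m (valuation a) := by
  have hl : iter l m (valuation (Fin.snoc a b : Fin (m + 1) → Bool)) = iter l m (valuation a) :=
    iter_congr l m fun j hj => valuation_snoc_of_le a b hj
  cases c <;> simp only [iter, Nat.add_sub_cancel, valuation_snoc_last, hl] <;> rfl

lemma card_filter_snoc {α : Type*} [Fintype α] {m : ℕ}
    (p : (Fin (m + 1) → α) → Prop) [DecidablePred p] :
    #{a | p a} = ∑ x : α, #{a : Fin m → α | p (Fin.snoc a x)} := by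
  rw [card_filter, ← (Fin.snocEquiv fun _ => α).sum_comp, Fintype.sum_prod_type]
  simp only [card_filter]
  rfl

def satCount (n : ℕ) (φ : (ℕ → Bool) → Bool) : ℕ :=
  #{a : Fin n → Bool | φ (valuation a) = true}

lemma satCount_iter_cons (c : Bool) (l : List Bool) (m : ℕ) :
    satCount (m + 1) (iter (c :: l) (m + 1)) = c.toNat * 2 ^ m + satCount m (iter l m) := by
  rw [satCount, card_filter_snoc, Fintype.sum_bool]
  simp only [iter_cons_valuation_snoc]
  cases c <;> simp [satCount]

lemma foldl_binary_eq (l : List Bool) (c : ℕ) :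
    l.foldl (fun acc b => 2 * acc + b.toNat) c
      = c * 2 ^ l.length + l.foldl (fun acc b => 2 * acc + b.toNat) 0 := by
  induction l generalizing c with
  | nil => simp
  | cons b l ih =>
    rw [List.foldl_cons, List.foldl_cons, ih, ih (2 * 0 + b.toNat), List.length_cons, pow_succ]
    ring

lemma satCount_iter (l : List Bool) :
    satCount l.length (iter l l.length) = l.foldl (fun acc b => 2 * acc + b.toNat) 0 := by
  induction l with
  | nil => rfl
  | cons c l ih =>
    rw [List.length_cons, satCount_iter_cons, ih, List.foldl_cons, foldl_binary_eq _ (2 * 0 + _)]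
    simp

theorem iter_count (n k : ℕ) (ℓ : List Bool)
    (hlen : ℓ.length = n)
    (hrep : ℓ.foldl (fun acc b => 2 * acc + b.toNat) 0 = k) :
    (Finset.univ.filter fun a : Fin n → Bool =>
        iter ℓ n (fun i => if h : 1 ≤ i ∧ i ≤ n then a ⟨i - 1, by omega⟩ else false)
          = true).card = k := by
  subst hlen hrep
  exact satCount_iter ℓ
end

section
/- Let H be a finite type and M, M' : H → O, O' functions such that the partition of H induced by M' refines that induced by M (M'(h₁) = M'(h₂) → M(h₁) = M(h₂)). Let μ : H → ℝ≥0 sum to 1. Define the conditional vulnerability V(M) = Σ_{o ∈ range(M)} max_{h ∈ M⁻¹(o)} μ(h). Then V(M) ≤ V(M'). -/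
/-!
Since `M'` refines `M`, we can write `M = g ∘ M'`. Each class of `M` is then a union of classes of
`M'`, and the maximal weight of a union is at most the sum of the maxima of its parts.
-/

open Finset

section Vulnerability

variable {ι κ κ' α : Type*} [DecidableEq κ] [DecidableEq κ']
  [AddCommMonoid α] [SemilatticeSup α] [OrderBot α] [IsOrderedAddMonoid α] [CanonicallyOrderedAdd α]

/-- The vulnerability `V(f)`, for the prior `w` on the secrets in `s`. -/
def condVulnerability (s : Finset ι) (f : ι → κ) (w : ι → α) : α :=
  ∑ o ∈ s.image f, {i ∈ s | f i = o}.sup w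

theorem condVulnerability_comp_le (s : Finset ι) (f : ι → κ) (g : κ → κ') (w : ι → α) :
    condVulnerability s (g ∘ f) w ≤ condVulnerability s f w := by
  unfold condVulnerability
  rw [← image_image, ← sum_fiberwise_of_maps_to fun o ho => mem_image_of_mem g ho]
  refine sum_le_sum fun o _ => Finset.sup_le fun i hi => ?_
  obtain ⟨his, hgi⟩ := mem_filter.mp hi
  calc w i ≤ {j ∈ s | f j = f i}.sup w := le_sup (mem_filter.mpr ⟨his, rfl⟩)
    _ ≤ ∑ o' ∈ s.image f with g o' = o, {j ∈ s | f j = o'}.sup w :=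
      single_le_sum (f := fun o' => {j ∈ s | f j = o'}.sup w) (fun _ _ => zero_le)
        (mem_filter.mpr ⟨mem_image_of_mem f his, hgi⟩)

end Vulnerability

theorem vulnerability_le_of_refines_general {H O O' : Type*} [Fintype H]
    [DecidableEq O] [DecidableEq O'] (M : H → O) (M' : H → O')
    (href : ∀ h₁ h₂ : H, M' h₁ = M' h₂ → M h₁ = M h₂)
    (μ : H → NNReal) :
    (∑ o ∈ Finset.univ.image M, (Finset.univ.filter fun h => M h = o).sup μ) ≤
      ∑ o' ∈ Finset.univ.image M', (Finset.univ.filter fun h => M' h = o').sup μ := by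
  rcases isEmpty_or_nonempty H with _ | ⟨⟨h₀⟩⟩
  · simp
  have hM : Function.extend M' M (fun _ => M h₀) ∘ M' = M :=
    Function.FactorsThrough.extend_comp _ href
  exact hM ▸ condVulnerability_comp_le univ M' _ μ

theorem vulnerability_le_of_refines {H O O' : Type*} [Fintype H]
    [DecidableEq O] [DecidableEq O'] (M : H → O) (M' : H → O')
    (href : ∀ h₁ h₂ : H, M' h₁ = M' h₂ → M h₁ = M h₂)
    (μ : H → NNReal) (hμ1 : ∑ h : H, μ h = 1) :
    (∑ o ∈ Finset.univ.image M, (Finset.univ.filter fun h => M h = o).sup μ) ≤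
      ∑ o' ∈ Finset.univ.image M', (Finset.univ.filter fun h => M' h = o').sup μ :=
  vulnerability_le_of_refines_general M M' href μ
end

section
/- Let H be a finite type, M, M' : H → O, O' functions, and suppose there exist h₀ ≠ h₁ with M'(h₀) = M'(h₁) but M(h₀) ≠ M(h₁). Define μ : H → ℝ≥0 by μ(h₀) = μ(h₁) = 1/2 and μ(h) = 0 otherwise. Then the Shannon entropy of the output distribution of M under μ equals 1, while the Shannon entropy of the output distribution of M' under μ equals 0. In particular SE[μ](M) > SE[μ](M'). -/
/-!
On the support `{h₀, h₁}` of `μ`, the map `M` is injective, so its output distribution is the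
uniform distribution on two points, of entropy `1`; the map `M'` is constant there, so its
output distribution is a point mass, of entropy `0`.
-/

open Finset

section OutputEntropy

variable {H O : Type*} [Fintype H] [DecidableEq O]

def fiberMass (μ : H → ℝ) (f : H → O) (o : O) : ℝ :=
  ∑ h ∈ univ.filter fun h => f h = o, μ h

noncomputable def outputEntropy (μ : H → ℝ) (f : H → O) : ℝ :=
  ∑ o ∈ univ.image f, fiberMass μ f o * Real.logb 2 (1 / fiberMass μ f o)

variable {μ : H → ℝ} {s : Finset H}

theorem fiberMass_eq_sum_filter_of_support (hμ : ∀ h ∉ s, μ h = 0) (f : H → O) (o : O) :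
    fiberMass μ f o = ∑ h ∈ s.filter fun h => f h = o, μ h := by
  refine (sum_subset (filter_subset_filter _ (subset_univ s)) fun h hh hhs => ?_).symm
  exact hμ h fun hs => hhs (mem_filter.2 ⟨hs, (mem_filter.1 hh).2⟩)

theorem outputEntropy_eq_sum_image_of_support (hμ : ∀ h ∉ s, μ h = 0) (f : H → O) :
    outputEntropy μ f =
      ∑ o ∈ s.image f, fiberMass μ f o * Real.logb 2 (1 / fiberMass μ f o) := by
  refine (sum_subset (image_subset_image (subset_univ s)) fun o _ ho => ?_).symm
  have hempty : s.filter (fun h => f h = o) = ∅ :=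
    filter_eq_empty_iff.2 fun h hs hfo => ho (mem_image.2 ⟨h, hs, hfo⟩)
  rw [fiberMass_eq_sum_filter_of_support hμ, hempty, sum_empty, zero_mul]

theorem outputEntropy_eq_of_injOn (hμ : ∀ h ∉ s, μ h = 0) {f : H → O}
    (hf : Set.InjOn f s) :
    outputEntropy μ f = ∑ h ∈ s, μ h * Real.logb 2 (1 / μ h) := by
  rw [outputEntropy_eq_sum_image_of_support hμ, sum_image hf]
  refine sum_congr rfl fun h hs => ?_
  have hfiber : s.filter (fun h' => f h' = f h) = {h} := by
    ext h'
    simp only [mem_filter, mem_singleton]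
    exact ⟨fun ⟨hs', hfh⟩ => hf hs' hs hfh, by rintro rfl; exact ⟨hs, rfl⟩⟩
  rw [fiberMass_eq_sum_filter_of_support hμ, hfiber, sum_singleton]

theorem outputEntropy_eq_zero_of_eqOn (hμ : ∀ h ∉ s, μ h = 0) (hμ_sum : ∑ h ∈ s, μ h = 1)
    {f : H → O} {h₀ : H} (hh₀ : h₀ ∈ s) (hf : ∀ h ∈ s, f h = f h₀) :
    outputEntropy μ f = 0 := by
  have himage : s.image f = {f h₀} :=
    eq_singleton_iff_unique_mem.2
      ⟨mem_image_of_mem f hh₀, fun o ho => by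
        obtain ⟨h, hs, rfl⟩ := mem_image.1 ho
        exact hf h hs⟩
  have hfiber : s.filter (fun h => f h = f h₀) = s := filter_true_of_mem hf
  rw [outputEntropy_eq_sum_image_of_support hμ, himage, sum_singleton,
    fiberMass_eq_sum_filter_of_support hμ, hfiber, hμ_sum]
  simp

end OutputEntropy

theorem SE_counterexample_distribution {H O O' : Type*} [Fintype H] [DecidableEq H]
    [DecidableEq O] [DecidableEq O'] (M : H → O) (M' : H → O')
    (h₀ h₁ : H) (hne : h₀ ≠ h₁) (hM' : M' h₀ = M' h₁) (hM : M h₀ ≠ M h₁)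
    (μ : H → ℝ) (hμ : ∀ h, μ h = if h = h₀ ∨ h = h₁ then (1 : ℝ) / 2 else 0) :
    (∑ o ∈ Finset.univ.image M,
        (∑ h ∈ Finset.univ.filter fun h => M h = o, μ h) *
          Real.logb 2 (1 / ∑ h ∈ Finset.univ.filter fun h => M h = o, μ h)) = 1 ∧
    (∑ o' ∈ Finset.univ.image M',
        (∑ h ∈ Finset.univ.filter fun h => M' h = o', μ h) *
          Real.logb 2 (1 / ∑ h ∈ Finset.univ.filter fun h => M' h = o', μ h)) = 0 ∧
    (∑ o' ∈ Finset.univ.image M',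
        (∑ h ∈ Finset.univ.filter fun h => M' h = o', μ h) *
          Real.logb 2 (1 / ∑ h ∈ Finset.univ.filter fun h => M' h = o', μ h)) <
      ∑ o ∈ Finset.univ.image M,
        (∑ h ∈ Finset.univ.filter fun h => M h = o, μ h) *
          Real.logb 2 (1 / ∑ h ∈ Finset.univ.filter fun h => M h = o, μ h) := by
  have hμ₀ : μ h₀ = 1 / 2 := by simp [hμ]
  have hμ₁ : μ h₁ = 1 / 2 := by simp [hμ]
  have hsupport : ∀ h ∉ ({h₀, h₁} : Finset H), μ h = 0 := fun h hh => by
    rw [hμ, if_neg (by simpa using hh)]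
  have hM_inj : Set.InjOn M ({h₀, h₁} : Finset H) := by
    simp [Set.InjOn, hM, hM.symm]
  have hentropy : outputEntropy μ M = 1 := by
    rw [outputEntropy_eq_of_injOn hsupport hM_inj, sum_pair hne, hμ₀, hμ₁]
    norm_num
  have hentropy' : outputEntropy μ M' = 0 :=
    outputEntropy_eq_zero_of_eqOn hsupport (by rw [sum_pair hne, hμ₀, hμ₁]; norm_num)
      (mem_insert_self h₀ {h₁}) (by simp [hM'])
  show outputEntropy μ M = 1 ∧ outputEntropy μ M' = 0 ∧ outputEntropy μ M' < outputEntropy μ M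
  rw [hentropy, hentropy']
  exact ⟨rfl, rfl, one_pos⟩
end
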